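/- If F(x) = f(x) + g(x) where f is differentiable and μ-strongly convex and g is convex, and F attains its minimum F*, then F satisfies the proximal-PL inequality (1/2)D_g(x, μ) ≥ μ(F(x) − F*) for all x. -/
import Mathlib

open RealInnerProductSpace

/-- The quantity `D_g(x, λ)` from the proximal-PL inequality. -/
noncomputable def Dg {d : ℕ} (f g : EuclideanSpace ℝ (Fin d) → ℝ)
    (x : EuclideanSpace ℝ (Fin d)) (lam : ℝ) : ℝ :=
  -2 * lam * ⨅ y : EuclideanSpace ℝ (Fin d),
    (⟪gradient f x, y - x⟫ + lam / 2 * ‖y - x‖ ^ 2 + g y - g x)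

theorem strongly_convex_plus_convex_satisfies_proxPL
    {d : ℕ} (f g : EuclideanSpace ℝ (Fin d) → ℝ) (μ Fstar : ℝ) (hμ : 0 < μ)
    (hdiff : Differentiable ℝ f) (hconv : ConvexOn ℝ Set.univ g)
    (hsc : ∀ x y, f x + ⟪gradient f x, y - x⟫ + μ / 2 * ‖y - x‖ ^ 2 ≤ f y)
    (hmin : ∃ z, f z + g z = Fstar ∧ ∀ y, Fstar ≤ f y + g y) :
    ∀ x, μ * (f x + g x - Fstar) ≤ 1 / 2 * Dg f g x μ := by
  obtain ⟨z, hz, hz'⟩ := hmin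
  intro x
  set a := gradient f x with ha
  set φ := fun y : EuclideanSpace ℝ (Fin d) =>
    (⟪a, y - x⟫ + μ / 2 * ‖y - x‖ ^ 2 + g y - g x) with hφ
  -- continuity of g
  have hgc : ContinuousOn g (Metric.closedBall x 1) :=
    (hconv.continuousOn isOpen_univ).mono (Set.subset_univ _)
  -- bound on closed ball
  obtain ⟨M, hM⟩ := ((isCompact_closedBall x 1).image_of_continuousOn hgc).bddAbove
  have hMball : ∀ v : EuclideanSpace ℝ (Fin d), ‖v - x‖ ≤ 1 → g v ≤ M := by
    intro v hv
    exact hM ⟨v, by simpa [Metric.mem_closedBall, dist_eq_norm] using hv, rfl⟩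
  have hxM : g x ≤ M := hMball x (by simp)
  set K := M - g x with hK
  clear_value K
  have hK0 : 0 ≤ K := by simp [hK]; linarith
  -- midpoint lower bound on the unit ball
  have hmid : ∀ v : EuclideanSpace ℝ (Fin d), ‖v - x‖ ≤ 1 → g x - K ≤ g v := by
    intro v hv
    have hw : ‖(x + (x - v)) - x‖ ≤ 1 := by
      have : (x + (x - v)) - x = -(v - x) := by abel
      rw [this, norm_neg]; exact hv
    have hcomb : (1/2 : ℝ) • v + (1/2 : ℝ) • (x + (x - v)) = x := by module
    have := hconv.2 (Set.mem_univ v) (Set.mem_univ (x + (x - v)))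
      (by norm_num : (0:ℝ) ≤ 1/2) (by norm_num : (0:ℝ) ≤ 1/2) (by norm_num)
    rw [hcomb] at this
    have hwM := hMball _ hw
    have : g x ≤ 1/2 * g v + 1/2 * M := by
      calc g x ≤ 1/2 * g v + 1/2 * g (x + (x - v)) := by simpa [smul_eq_mul] using this
        _ ≤ 1/2 * g v + 1/2 * M := by linarith
    simp only [hK]; linarith
  -- global linear lower bound: g y - g x ≥ -K * (1 + ‖y - x‖)
  have hlin : ∀ y : EuclideanSpace ℝ (Fin d), -(K * (1 + ‖y - x‖)) ≤ g y - g x := by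
    intro y
    set t := ‖y - x‖ with ht
    have ht0 : 0 ≤ t := norm_nonneg _
    rcases le_or_gt t 1 with h1 | h1
    · have := hmid y h1
      nlinarith
    · -- t > 1
      have htpos : 0 < t := by linarith
      set u := x + t⁻¹ • (y - x) with hu
      have hu1 : ‖u - x‖ ≤ 1 := by
        have : u - x = t⁻¹ • (y - x) := by simp [hu]
        rw [this, norm_smul, ← ht, Real.norm_eq_abs, abs_of_pos (inv_pos.2 htpos),
          inv_mul_cancel₀ htpos.ne']
      have hcomb : (1 - t⁻¹) • x + t⁻¹ • y = u := by
        simp only [hu]; module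
      have hconv2 := hconv.2 (Set.mem_univ x) (Set.mem_univ y)
        (by
          have : t⁻¹ ≤ 1 := by
            rw [inv_le_one_iff₀]; right; linarith
          linarith : (0:ℝ) ≤ 1 - t⁻¹)
        (le_of_lt (inv_pos.2 htpos)) (by ring)
      rw [hcomb] at hconv2
      have hul := hmid u hu1
      -- g x - K ≤ g u ≤ (1 - t⁻¹) g x + t⁻¹ g y
      have h2 : g x - K ≤ (1 - t⁻¹) * g x + t⁻¹ * g y := by
        calc g x - K ≤ g u := hul
          _ ≤ (1 - t⁻¹) * g x + t⁻¹ * g y := by simpa [smul_eq_mul] using hconv2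
      -- multiply by t
      have h3 : t * (g x - K) ≤ t * ((1 - t⁻¹) * g x + t⁻¹ * g y) :=
        mul_le_mul_of_nonneg_left h2 ht0
      have h4 : t * ((1 - t⁻¹) * g x + t⁻¹ * g y) = t * g x - g x + g y := by
        field_simp
      rw [h4] at h3
      nlinarith
  -- bounded below
  have hbdd : BddBelow (Set.range φ) := by
    refine ⟨-(‖a‖ + K)^2 / (2*μ) - K, ?_⟩
    rintro r ⟨y, rfl⟩
    have hinner : -(‖a‖ * ‖y - x‖) ≤ ⟪a, y - x⟫ := by
      have := abs_real_inner_le_norm a (y - x)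
      cases abs_le.mp this with
      | intro h1 h2 => linarith
    have hg := hlin y
    set t := ‖y - x‖ with ht
    clear_value t
    have ht0 : 0 ≤ t := by rw [ht]; exact norm_nonneg _
    have hA : 0 ≤ ‖a‖ := norm_nonneg _
    have hq : -(‖a‖ + K)^2 / (2*μ) ≤ μ/2 * t^2 - (‖a‖+K)*t := by
      rw [div_le_iff₀ (by linarith : (0:ℝ) < 2*μ)]
      nlinarith [sq_nonneg (μ * t - (‖a‖ + K))]
    simp only [hφ]
    rw [← ht]
    nlinarith [hq, hinner, hg, hK0, ht0, hA]
  -- value at z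
  have hvz : φ z ≤ Fstar - (f x + g x) := by
    have := hsc x z
    simp only [hφ]
    nlinarith
  have hinf : (⨅ y, φ y) ≤ Fstar - (f x + g x) := ciInf_le_of_le hbdd z hvz
  have hmul : μ * (⨅ y, φ y) ≤ μ * (Fstar - (f x + g x)) :=
    mul_le_mul_of_nonneg_left hinf hμ.le
  simp only [Dg, ← ha, ← hφ]
  nlinarith
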